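/- arXiv:2204.10507 — 2 statements merged into one kernel-verified Lean document; each statement's English description precedes it below -/
import Mathlib

section
/- If A is a centrally essential ring such that A/J(A) is not commutative, then the polynomial ring A[x] is a centrally essential ring which is not right quasi-invariant (i.e., it has a maximal right ideal that is not a two-sided ideal). -/
/-!
For `p ≠ 0` in `A[X]`, multiplying `p` on the right by central constants, one non-central
coefficient at a time, makes all its coefficients central while keeping it nonzero; a polynomial
with central coefficients is central.

For a maximal right ideal `M` of `A` and `b ∈ A` with `b M ⊆ M`, the polynomials whose left value
`∑ bⁿ aₙ` lies in `M` form a maximal right ideal of `A[X]`. If all maximal right ideals of `A[X]`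
are two-sided, then taking `b = 0` shows that `M` is two-sided, and then `C b * (X - C a)` shows
that `a b - b a ∈ M`. So every commutator lies in every maximal right ideal of `A`, that is, in
`J(A)`.
-/

/-- A ring is *centrally essential* if its center is an essential submodule over the
center, i.e. every nonzero element has a nonzero central multiple by a central element. -/
def IsCentrallyEssential (A : Type*) [Ring A] : Prop :=
  ∀ a : A, a ≠ 0 → ∃ z ∈ Set.center A, a * z ≠ 0 ∧ a * z ∈ Set.center A

/-- A right ideal (submodule of `A` as a right module over itself) is a two-sided ideal
if it is closed under left multiplication. -/
def IsTwoSidedRightIdeal {A : Type*} [Ring A] (I : Submodule Aᵐᵒᵖ A) : Prop :=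
  ∀ a x : A, x ∈ I → a * x ∈ I

/-- A ring is right quasi-invariant if every maximal right ideal is two-sided. -/
def IsRightQuasiInvariant (A : Type*) [Ring A] : Prop :=
  ∀ M : Submodule Aᵐᵒᵖ A, IsCoatom M → IsTwoSidedRightIdeal M

open Polynomial MulOpposite

section

variable {A : Type*} [Ring A]

theorem IsCentrallyEssential.exists_mul_mem_center_of_finset (h : IsCentrallyEssential A)
    {ι : Type*} (f : ι → A) (s : Finset ι) {j : ι} (hj : f j ≠ 0) :
    ∃ c ∈ Set.center A, (∃ k, f k * c ≠ 0) ∧ ∀ i ∈ s, f i * c ∈ Set.center A := by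
  classical
  induction s using Finset.induction_on with
  | empty => exact ⟨1, Set.one_mem_center, ⟨j, by rwa [mul_one]⟩, by simp⟩
  | insert i s _ ih =>
    obtain ⟨c, hc, hne, hs⟩ := ih
    simp only [Finset.forall_mem_insert]
    by_cases hic : f i * c ∈ Set.center A
    · exact ⟨c, hc, hne, hic, hs⟩
    obtain ⟨d, hd, hid, hidc⟩ := h (f i * c) fun h0 => hic (h0 ▸ Set.zero_mem_center)
    refine ⟨c * d, Set.mul_mem_center hc hd, ⟨i, by rwa [← mul_assoc]⟩, ?_, fun k hk => ?_⟩
    · rwa [← mul_assoc]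
    · rw [← mul_assoc]
      exact Set.mul_mem_center (hs k hk) hd

namespace Polynomial

theorem mem_center_of_coeff_mem_center {p : A[X]} (hp : ∀ n, p.coeff n ∈ Set.center A) :
    p ∈ Set.center A[X] := by
  rw [Semigroup.mem_center_iff]
  intro q
  induction q using Polynomial.induction_on' with
  | add f g hf hg => rw [add_mul, mul_add, hf, hg]
  | monomial n s =>
    have hC : Commute (C s) p := by
      ext k
      rw [coeff_C_mul, coeff_mul_C, Semigroup.mem_center_iff.mp (hp k) s]
    rw [← C_mul_X_pow_eq_monomial]
    exact (hC.mul_left (commute_X_pow p n)).eq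

theorem C_mem_center {c : A} (hc : c ∈ Set.center A) : C c ∈ Set.center A[X] :=
  mem_center_of_coeff_mem_center fun n => by
    rw [coeff_C]
    split_ifs
    exacts [hc, Set.zero_mem_center]

end Polynomial

theorem IsCentrallyEssential.polynomial (h : IsCentrallyEssential A) :
    IsCentrallyEssential A[X] := by
  intro p hp
  obtain ⟨j, hj⟩ : ∃ j, p.coeff j ≠ 0 := by
    contrapose! hp
    exact Polynomial.ext hp
  obtain ⟨c, hc, ⟨k, hk⟩, hcen⟩ := h.exists_mul_mem_center_of_finset p.coeff p.support hj
  refine ⟨C c, C_mem_center hc, fun h0 => hk ?_, mem_center_of_coeff_mem_center fun n => ?_⟩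
  · rw [← coeff_mul_C, h0, coeff_zero]
  · rw [coeff_mul_C]
    by_cases hn : n ∈ p.support
    · exact hcen n hn
    · rw [notMem_support_iff.mp hn, zero_mul]
      exact Set.zero_mem_center

theorem isUnit_one_sub_mul_comm {a b : A} (h : IsUnit (1 - a * b)) : IsUnit (1 - b * a) := by
  have := (spectrum.unit_mem_mul_comm (R := ℤ) (a := a) (b := b) (r := 1)).not
  simp only [spectrum.mem_iff, Units.val_one, map_one, not_not] at this
  exact this.mp h

theorem Ideal.mem_jacobson_bot_of_op_mem {x : A} (hx : op x ∈ (⊥ : Ideal Aᵐᵒᵖ).jacobson) :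
    x ∈ (⊥ : Ideal A).jacobson := by
  have right_inv : ∀ y, ∃ z, (1 - x * y) * z = 1 := by
    intro y
    obtain ⟨z, hz⟩ := Ideal.mem_jacobson_iff.mp hx (op (-y))
    rw [Ideal.mem_bot, sub_eq_zero] at hz
    refine ⟨unop z, op_injective ?_⟩
    conv_rhs => rw [op_one, ← hz]
    simp only [op_mul, op_sub, op_one, op_unop, op_neg]
    noncomm_ring
  have hunit : ∀ y, IsUnit (1 - x * y) := by
    intro y
    obtain ⟨z, hz⟩ := right_inv y
    -- `z = 1 - x * (-(y * z))` has a right inverse too, so `z` is a unit with inverse `1 - x * y`.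
    obtain ⟨w, hw⟩ := right_inv (-(y * z))
    have hzw : z * w = 1 := by
      rwa [show 1 - x * -(y * z) = z by rw [← hz]; noncomm_ring] at hw
    exact ⟨⟨_, z, hz, left_inv_eq_right_inv hz hzw ▸ hzw⟩, rfl⟩
  refine Ideal.mem_jacobson_iff.mpr fun y => ?_
  obtain ⟨u, hu⟩ := isUnit_one_sub_mul_comm (hunit (-y))
  refine ⟨↑u⁻¹, ?_⟩
  rw [Ideal.mem_bot, sub_eq_zero, ← Units.inv_mul u, hu]
  noncomm_ring

theorem op_pow_mul_mem {b m : A} {M : Ideal Aᵐᵒᵖ} (hM : ∀ m, op m ∈ M → op (b * m) ∈ M)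
    (hm : op m ∈ M) (n : ℕ) : op (b ^ n * m) ∈ M := by
  induction n with
  | zero => rwa [pow_zero, one_mul]
  | succ n ih => rw [pow_succ', mul_assoc]; exact hM _ ih

namespace Polynomial

-- Unlike `eval`, this is right `A`-linear, and it turns right multiplication by `X` into left
-- multiplication by `b`.
noncomputable def leftEval (b : A) : A[X] →+ A where
  toFun f := f.sum fun n a => b ^ n * a
  map_zero' := sum_zero_index _
  map_add' f g := sum_add_index f g _ (fun _ => mul_zero _) fun _ _ _ => mul_add _ _ _

variable (b : A)

theorem leftEval_monomial (n : ℕ) (a : A) : leftEval b (monomial n a) = b ^ n * a :=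
  sum_monomial_index a _ (mul_zero _)

theorem leftEval_C (a : A) : leftEval b (C a) = a := by
  rw [← monomial_zero_left, leftEval_monomial, pow_zero, one_mul]

theorem leftEval_X : leftEval b X = b := by
  rw [X, leftEval_monomial, pow_one, mul_one]

theorem leftEval_mul_monomial (f : A[X]) (n : ℕ) (s : A) :
    leftEval b (f * monomial n s) = b ^ n * leftEval b f * s := by
  induction f using Polynomial.induction_on' with
  | add p q hp hq => rw [add_mul, map_add, map_add, hp, hq, mul_add, add_mul]
  | monomial m a =>
    rw [monomial_mul_monomial, leftEval_monomial, leftEval_monomial, pow_add, pow_mul_comm]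
    noncomm_ring

-- Right ideals of `A` appear as left ideals `M : Ideal Aᵐᵒᵖ` of the opposite ring, so that
-- `(⊥ : Ideal Aᵐᵒᵖ).jacobson` is the intersection of the maximal right ideals of `A`.
variable {b} (M : Ideal Aᵐᵒᵖ) (hM : ∀ m, op m ∈ M → op (b * m) ∈ M)
include hM

def leftEvalComap : Submodule A[X]ᵐᵒᵖ A[X] where
  carrier := {f | op (leftEval b f) ∈ M}
  add_mem' hf hg := by simpa only [Set.mem_ofPred_eq, map_add, op_add] using M.add_mem hf hg
  zero_mem' := by simp
  smul_mem' c f hf := by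
    rw [smul_eq_mul_unop]
    induction c.unop using Polynomial.induction_on' with
    | add p q hp hq =>
      simpa only [Set.mem_ofPred_eq, mul_add, map_add, op_add] using M.add_mem hp hq
    | monomial n s =>
      rw [Set.mem_ofPred_eq, leftEval_mul_monomial, op_mul]
      exact M.mul_mem_left _ (op_pow_mul_mem hM hf n)

theorem mem_leftEvalComap {f : A[X]} : f ∈ leftEvalComap M hM ↔ op (leftEval b f) ∈ M := Iff.rfl

theorem isCoatom_leftEvalComap (hmax : M.IsMaximal) : IsCoatom (leftEvalComap M hM) := by
  refine ⟨fun htop => hmax.ne_top ?_, fun N hN => ?_⟩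
  · rw [Ideal.eq_top_iff_one, ← op_one, ← leftEval_C b 1, ← mem_leftEvalComap M hM, htop]
    exact Submodule.mem_top
  obtain ⟨f, hfN, hf⟩ := SetLike.exists_of_lt hN
  obtain ⟨y, i, hi, hyi⟩ := hmax.exists_inv hf
  have hfy : f * C (unop y) ∈ N := N.smul_mem (op (C (unop y))) hfN
  have hsub : 1 - f * C (unop y) ∈ N := by
    apply hN.le
    rw [mem_leftEvalComap, map_sub, ← monomial_zero_left, leftEval_mul_monomial, ← C_1, leftEval_C,
      pow_zero, one_mul]
    convert hi
    rw [op_sub, op_one, ← hyi, op_mul, op_unop, add_sub_cancel_left]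
  have hone : (1 : A[X]) ∈ N := by simpa using N.add_mem hsub hfy
  exact Submodule.eq_top_iff'.mpr fun p => by simpa using N.smul_mem (op p) hone

end Polynomial

theorem op_mul_mem_of_isRightQuasiInvariant_polynomial (hq : IsRightQuasiInvariant A[X])
    {M : Ideal Aᵐᵒᵖ} (hmax : M.IsMaximal) (a : A) {m : A} (hm : op m ∈ M) : op (a * m) ∈ M := by
  have hzero : ∀ m : A, op m ∈ M → op (0 * m) ∈ M := fun _ _ => by
    rw [zero_mul, op_zero]
    exact M.zero_mem
  have := hq _ (isCoatom_leftEvalComap M hzero hmax) (C a) (C m)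
    (by rwa [mem_leftEvalComap, leftEval_C])
  rwa [mem_leftEvalComap, ← C_mul, leftEval_C] at this

theorem op_commutator_mem_of_isRightQuasiInvariant_polynomial (hq : IsRightQuasiInvariant A[X])
    {M : Ideal Aᵐᵒᵖ} (hmax : M.IsMaximal) (a b : A) : op (a * b - b * a) ∈ M := by
  have ha : ∀ m : A, op m ∈ M → op (a * m) ∈ M := fun _ =>
    op_mul_mem_of_isRightQuasiInvariant_polynomial hq hmax a
  have hXa : X - C a ∈ leftEvalComap M ha := by
    rw [mem_leftEvalComap, map_sub, leftEval_X, leftEval_C, sub_self, op_zero]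
    exact M.zero_mem
  have := hq _ (isCoatom_leftEvalComap M ha hmax) (C b) _ hXa
  rwa [mem_leftEvalComap, mul_sub, ← C_mul, C_mul_X_eq_monomial, map_sub, leftEval_monomial,
    leftEval_C, pow_one] at this

theorem commutator_mem_jacobson_of_isRightQuasiInvariant_polynomial
    (hq : IsRightQuasiInvariant A[X]) (a b : A) : a * b - b * a ∈ (⊥ : Ideal A).jacobson :=
  Ideal.mem_jacobson_bot_of_op_mem <| Submodule.mem_sInf.mpr fun _ ⟨_, hmax⟩ =>
    op_commutator_mem_of_isRightQuasiInvariant_polynomial hq hmax a b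

end

/-- If `A` is centrally essential and `A/J(A)` is not commutative, then `A[x]` is a
centrally essential ring which is not right quasi-invariant. -/
theorem stmt_11 (A : Type*) [Ring A] (h : IsCentrallyEssential A)
    (hnc : ¬ ∀ a b : A, a * b - b * a ∈ (⊥ : Ideal A).jacobson) :
    IsCentrallyEssential (Polynomial A) ∧ ¬ IsRightQuasiInvariant (Polynomial A) :=
  ⟨h.polynomial, fun hq => hnc (commutator_mem_jacobson_of_isRightQuasiInvariant_polynomial hq)⟩
end

section
/- Let F be a field and 𝒜 the 7-dimensional F-subalgebra of M_7(F) consisting of matrices A(α,a,b,c,d,e,f) with diagonal α, first row (α,a,b,c,d,e,f), and additional nonzero entries A[2,4]=b, A[2,7]=d, A[3,7]=e, A[5,7]=a, A[6,7]=b. Then the center Z(𝒜) consists exactly of those matrices with a = b = 0, i.e., matrices of the form A(α,0,0,c,d,e,f). -/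
/-! Multiplying two generic elements shows that the only entry of `M N - N M` that can be
nonzero is the `(1,4)` entry, equal to `a b' - a' b`. So `mat α a b c d e f` is central
exactly when `a b' = a' b` for all `a', b'`; testing `(a', b') = (0, 1)` and `(1, 0)`
gives `a = b = 0`. -/

/-- The generic element of the 7-dimensional subalgebra `𝒜` of `M₇(F)` from the paper:
diagonal `α`, first row `(α, a, b, c, d, e, f)`, and additional entries
`A[2,4] = b`, `A[2,7] = d`, `A[3,7] = e`, `A[5,7] = a`, `A[6,7] = b`. -/
def mat (F : Type*) [Field F] (α a b c d e f : F) : Matrix (Fin 7) (Fin 7) F :=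
  !![α, a, b, c, d, e, f;
     0, α, 0, b, 0, 0, d;
     0, 0, α, 0, 0, 0, e;
     0, 0, 0, α, 0, 0, 0;
     0, 0, 0, 0, α, 0, a;
     0, 0, 0, 0, 0, α, b;
     0, 0, 0, 0, 0, 0, α]

/-- The underlying set of the algebra `𝒜`. -/
def ASet (F : Type*) [Field F] : Set (Matrix (Fin 7) (Fin 7) F) :=
  {M | ∃ α a b c d e f : F, M = mat F α a b c d e f}

section
variable {F : Type*} [Field F]

lemma mat_mul (α a b c d e f α' a' b' c' d' e' f' : F) :
    mat F α a b c d e f * mat F α' a' b' c' d' e' f' =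
      mat F (α * α') (α * a' + a * α') (α * b' + b * α') (α * c' + a * b' + c * α')
        (α * d' + d * α') (α * e' + e * α')
        (α * f' + a * d' + b * e' + d * a' + e * b' + f * α') := by
  ext i j
  fin_cases i <;> fin_cases j <;>
    simp [mat, Matrix.mul_apply, Fin.sum_univ_succ] <;> ring

lemma mat_commute_iff (α a b c d e f α' a' b' c' d' e' f' : F) :
    Commute (mat F α a b c d e f) (mat F α' a' b' c' d' e' f') ↔ a * b' = a' * b := by
  rw [Commute, SemiconjBy, mat_mul, mat_mul]
  constructor
  · intro h
    have h03 := congrFun (congrFun h 0) 3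
    simp [mat] at h03
    linear_combination h03
  · intro h
    congr 1 <;> first | ring1 | linear_combination h
end

/-- The center of `𝒜` consists exactly of the matrices `mat α 0 0 c d e f`,
i.e. those with `a = b = 0`. -/
theorem stmt_13 (F : Type*) [Field F] :
    ∀ M ∈ ASet F, ((∀ N ∈ ASet F, M * N = N * M) ↔
      ∃ α c d e f : F, M = mat F α 0 0 c d e f) := by
  rintro M ⟨α, a, b, c, d, e, f, rfl⟩
  constructor
  · intro h
    have ha := (mat_commute_iff ..).1 (h _ ⟨0, 0, 1, 0, 0, 0, 0, rfl⟩)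
    have hb := (mat_commute_iff ..).1 (h _ ⟨0, 1, 0, 0, 0, 0, 0, rfl⟩)
    refine ⟨α, c, d, e, f, ?_⟩
    rw [show a = 0 by simpa using ha, show b = 0 by simpa using hb.symm]
  · rintro ⟨α', c', d', e', f', hM⟩ N ⟨β, a', b', c'', d'', e'', f'', rfl⟩
    rw [hM]
    exact (mat_commute_iff ..).2 (by ring)
end
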